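/- arXiv:0801.1462 — 5 statements merged into one kernel-verified Lean document; each statement's English description precedes it below -/
import Mathlib

section
/- Let R be a ring and F a class of left R-modules defining a homological dimension. If F is closed under countable direct sums, then F is closed under direct summands. -/
open CategoryTheory

universe u

noncomputable section

variable {R : Type u} [Ring R]

/-- Membership in `F ∪ {0}`. -/
def MemF0 (F : ModuleCat.{u} R → Prop) (M : ModuleCat.{u} R) : Prop :=
  F M ∨ Subsingleton M

/-- There is a short exact sequence `0 → A → B → C → 0`. -/
def IsSES {R : Type u} [Ring R] (A B C : ModuleCat.{u} R) : Prop :=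
  ∃ (f : A ⟶ B) (g : B ⟶ C),
    Function.Injective f ∧ Function.Surjective g ∧ Function.Exact f g

/-- `FDimLE F n M` : `M` has left `F`-dimension `≤ n`, i.e. there is an exact sequence
`0 → F_n → ⋯ → F_0 → M → 0` with all `F_j ∈ F ∪ {0}`. -/
def FDimLE (F : ModuleCat.{u} R → Prop) : ℕ → ModuleCat.{u} R → Prop
  | 0, M => MemF0 F M
  | n + 1, M => ∃ K F0 : ModuleCat.{u} R, MemF0 F F0 ∧ IsSES K F0 M ∧ FDimLE F n K

/-- `M` admits a (possibly infinite) `F`-resolution `⋯ → F_1 → F_0 → M → 0`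
with all terms in `F ∪ {0}`. -/
def HasFRes (F : ModuleCat.{u} R → Prop) (M : ModuleCat.{u} R) : Prop :=
  ∃ K Fo : ℕ → ModuleCat.{u} R, K 0 = M ∧
    ∀ n, MemF0 F (Fo n) ∧ IsSES (K (n + 1)) (Fo n) (K n)

/-- `IsFKernel F n K X` : there is an exact sequence
`0 → K → F_n → ⋯ → F_0 → X → 0` with all `F_i ∈ F`. -/
def IsFKernel (F : ModuleCat.{u} R → Prop) : ℕ → ModuleCat.{u} R → ModuleCat.{u} R → Prop
  | 0, K, X => ∃ F0, F F0 ∧ IsSES K F0 X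
  | n + 1, K, X => ∃ K1 F0, F F0 ∧ IsSES K1 F0 X ∧ IsFKernel F n K K1

/-- The class `F` defines a homological dimension. -/
def DefinesHomDim (F : ModuleCat.{u} R → Prop) : Prop :=
  (∀ K Fm M : ModuleCat.{u} R, F Fm → IsSES K Fm M → HasFRes F M → HasFRes F K) ∧
  (∀ (n : ℕ) (K X : ModuleCat.{u} R), FDimLE F (n + 1) X → IsFKernel F n K X → F K)

/-- `M` is a homomorphic image of a module in `F`. -/
def IsImageOfF (F : ModuleCat.{u} R → Prop) (M : ModuleCat.{u} R) : Prop :=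
  ∃ F0 : ModuleCat.{u} R, F F0 ∧ ∃ g : F0 ⟶ M, Function.Surjective g

/-- `F` is closed under finite (binary) direct sums. -/
def ClosedUnderFinSums (F : ModuleCat.{u} R → Prop) : Prop :=
  ∀ A B : ModuleCat.{u} R, F A → F B → F (ModuleCat.of R (A × B))

/-- The class of homomorphic images of modules in `F` is closed under extensions. -/
def ImagesClosedUnderExt (F : ModuleCat.{u} R → Prop) : Prop :=
  ∀ (A B C : ModuleCat.{u} R) (f : A ⟶ B) (g : B ⟶ C),
    Function.Injective f → Function.Surjective g → Function.Exact f g →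
      IsImageOfF F A → IsImageOfF F C → IsImageOfF F B

/-- `Ext^i(M, N)` vanishes. -/
def ExtZero {R : Type u} [Ring R] (i : ℕ) (M N : ModuleCat.{u} R) : Prop :=
  Subsingleton (((Ext ℤ (ModuleCat.{u} R) i).obj (Opposite.op M)).obj N)

end

/-! If `i : N → M` has a retraction `p`, write `M = N ⊕ L` with `L = ker p`. The Eilenberg
swindle `M^(ℕ) = N ⊕ (L ⊕ N)^(ℕ) ≅ N ⊕ M^(ℕ)` yields a short exact sequence
`0 → N → M^(ℕ) → M^(ℕ) → 0`, realised by `x ↦ (x_n - i p x_n + i p x_{n+1})_n`.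
Since `M^(ℕ) ∈ F` has `F`-dimension `≤ 1` (trivially), condition (2) with `n = 0` puts its
kernel `N` in `F`. -/

open DirectSum

section Swindle

variable {R : Type*} [Ring R] {M N : Type*} [AddCommGroup M] [Module R M]
  [AddCommGroup N] [Module R N]

noncomputable def DirectSum.shiftLeft : (⨁ _ : ℕ, M) →ₗ[R] ⨁ _ : ℕ, M where
  toFun x := DFinsupp.comapDomain Nat.succ Nat.succ_injective x
  map_add' := DFinsupp.comapDomain_add _ _
  map_smul' := DFinsupp.comapDomain_smul _ _

@[simp]
theorem DirectSum.shiftLeft_apply (x : ⨁ _ : ℕ, M) (n : ℕ) :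
    shiftLeft (R := R) x n = x (n + 1) :=
  rfl

@[simp]
theorem DirectSum.lof_const_apply (k n : ℕ) (m : M) :
    lof R ℕ (fun _ => M) k m n = if k = n then m else 0 := by
  rw [lof_eq_of, of_apply]
  split_ifs <;> simp_all

noncomputable def swindleMap (i : N →ₗ[R] M) (p : M →ₗ[R] N) :
    (⨁ _ : ℕ, M) →ₗ[R] ⨁ _ : ℕ, M :=
  lmap (fun _ => LinearMap.id - i ∘ₗ p) + lmap (fun _ => i ∘ₗ p) ∘ₗ shiftLeft

variable (i : N →ₗ[R] M) (p : M →ₗ[R] N)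

@[simp]
theorem swindleMap_apply (x : ⨁ _ : ℕ, M) (n : ℕ) :
    swindleMap i p x n = x n - i (p (x n)) + i (p (x (n + 1))) := by
  simp [swindleMap]

variable {i p}

theorem swindleMap_surjective (hpi : ∀ y, p (i y) = y) :
    Function.Surjective (swindleMap i p) := by
  intro y
  induction y using DirectSum.induction_on with
  | zero => exact ⟨0, map_zero _⟩
  | of n m =>
    refine ⟨lof R ℕ (fun _ => M) n (m - i (p m)) +
      lof R ℕ (fun _ => M) (n + 1) (i (p m)), ?_⟩
    ext k
    rw [← lof_eq_of R]
    simp only [swindleMap_apply, map_add, DirectSum.add_apply, lof_const_apply]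
    split_ifs <;> simp_all
  | add y z hy hz =>
    obtain ⟨a, rfl⟩ := hy
    obtain ⟨b, rfl⟩ := hz
    exact ⟨a + b, map_add _ _ _⟩

theorem exact_lof_zero_comp_swindleMap (hpi : ∀ y, p (i y) = y) :
    Function.Exact (lof R ℕ (fun _ => M) 0 ∘ₗ i) (swindleMap i p) := by
  intro x
  constructor
  · intro hx
    have hcomp (n : ℕ) : x n - i (p (x n)) + i (p (x (n + 1))) = 0 := by
      rw [← swindleMap_apply, hx, DirectSum.zero_apply]
    have hp_succ (n : ℕ) : p (x (n + 1)) = 0 := by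
      simpa [hpi] using congrArg p (hcomp n)
    have hx_eq (n : ℕ) : x n = i (p (x n)) := by
      simpa [hp_succ n, sub_eq_zero] using hcomp n
    have hx_succ (n : ℕ) : x (n + 1) = 0 := by rw [hx_eq, hp_succ, map_zero]
    refine ⟨p (x 0), ?_⟩
    ext n
    rcases n with _ | n
    · simpa using (hx_eq 0).symm
    · simp [hx_succ]
  · rintro ⟨y, rfl⟩
    ext n
    rcases n with _ | n <;> simp [hpi]

end Swindle

section ModuleCat

variable {R : Type u} [Ring R]

theorem isSES_punit_id (M : ModuleCat.{u} R) : IsSES (ModuleCat.of R PUnit) M M :=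
  ⟨0, 𝟙 M, fun _ _ _ => Subsingleton.elim _ _, fun y => ⟨y, rfl⟩,
    fun y => by simp [eq_comm]⟩

theorem fDimLE_one_of_memF0 {F : ModuleCat.{u} R → Prop} {M : ModuleCat.{u} R}
    (hM : MemF0 F M) : FDimLE F 1 M :=
  ⟨ModuleCat.of R PUnit, M, hM, isSES_punit_id M, Or.inr inferInstance⟩

theorem isSES_directSum_of_retract {M N : ModuleCat.{u} R} (i : N ⟶ M) (p : M ⟶ N)
    (hip : i ≫ p = 𝟙 N) :
    IsSES N (ModuleCat.of R (⨁ _ : ℕ, M)) (ModuleCat.of R (⨁ _ : ℕ, M)) := by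
  have hpi (y : N) : p.hom (i.hom y) = y := by
    simpa using ConcreteCategory.congr_hom hip y
  refine ⟨ModuleCat.ofHom (lof R ℕ (fun _ => M) 0 ∘ₗ i.hom),
    ModuleCat.ofHom (swindleMap i.hom p.hom), ?_, swindleMap_surjective hpi,
    exact_lof_zero_comp_swindleMap hpi⟩
  exact (of_injective (β := fun _ : ℕ => M) 0).comp (Function.LeftInverse.injective hpi)

end ModuleCat

open DirectSum in
theorem stmt3 {R : Type u} [Ring R] (F : ModuleCat.{u} R → Prop)
    (hF : DefinesHomDim F)
    (hsum : ∀ M : ℕ → ModuleCat.{u} R, (∀ n, F (M n)) →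
      F (ModuleCat.of R (⨁ n, M n))) :
    ∀ M N : ModuleCat.{u} R,
      (∃ (i : N ⟶ M) (p : M ⟶ N), i ≫ p = 𝟙 N) → F M → F N := by
  rintro M N ⟨i, p, hip⟩ hM
  have hS : F (ModuleCat.of R (⨁ _ : ℕ, M)) := hsum (fun _ => M) fun _ => hM
  exact hF.2 0 N _ (fDimLE_one_of_memF0 (Or.inl hS)) ⟨_, hS, isSES_directSum_of_retract i p hip⟩
end

section
/- Let R be a ring, F a class of left R-modules defining a homological dimension and closed under finite direct sums. For a short exact sequence 0 → A → B → C → 0 of left R-modules: if B and C have F-dimension ≤ i, then A has F-dimension ≤ i. -/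
open CategoryTheory

universe u

/-!
Induction on `i`. For `i = 0`, `B ∈ F` and `C` has `F`-dimension `≤ 1`, so condition (2) puts `A`
in `F`. For `i = n + 1`, cover `B` by `P ∈ F`; the preimage `A'` of `A` in `P` has an
`F`-resolution by (1), so `A` is covered by some `G ∈ F`. Now `ker (G ⊕ P → B)` and
`A' = ker (P → C)` are first syzygies of `B` and `C`, hence of `F`-dimension `≤ n` by (1) and (2),
and they are the middle and right terms of a short exact sequence whose left term is
`ker (G → A)`. By induction this kernel has `F`-dimension `≤ n`, so `A` has `F`-dimension `≤ n + 1`.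
-/

open Function LinearMap

section LinearAlgebra

variable {R : Type u} [Ring R] {A B C G P : Type u}
  [AddCommGroup A] [AddCommGroup B] [AddCommGroup C] [AddCommGroup G] [AddCommGroup P]
  [Module R A] [Module R B] [Module R C] [Module R G] [Module R P]

theorem isSES_of_linearMap (f : A →ₗ[R] B) (g : B →ₗ[R] C) (hf : Injective f)
    (hg : Surjective g) (hfg : Exact f g) :
    IsSES (ModuleCat.of R A) (ModuleCat.of R B) (ModuleCat.of R C) :=
  ⟨ModuleCat.ofHom f, ModuleCat.ofHom g, hf, hg, hfg⟩

theorem isSES_ker (g : B →ₗ[R] C) (hg : Surjective g) :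
    IsSES (ModuleCat.of R (ker g)) (ModuleCat.of R B) (ModuleCat.of R C) :=
  isSES_of_linearMap _ g Subtype.val_injective hg (exact_subtype_ker_map g)

instance subsingleton_ker_id : Subsingleton (ker (LinearMap.id : B →ₗ[R] B)) :=
  ⟨fun x y => Subtype.ext (x.2.trans y.2.symm)⟩

theorem exists_surjective_comp_eq_of_range_eq {f : A →ₗ[R] B} (hf : Injective f)
    {c : G →ₗ[R] B} (hc : range c = range f) : ∃ a : G →ₗ[R] A, Surjective a ∧ f ∘ₗ a = c := by
  have hcf : ∀ x, c x ∈ range f := fun x => hc ▸ mem_range_self c x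
  let a := (LinearEquiv.ofInjective f hf).symm.toLinearMap ∘ₗ c.codRestrict (range f) hcf
  have hfa : f ∘ₗ a = c := by
    ext x
    exact LinearEquiv.ofInjective_symm_apply (f := f) (h := hf) ⟨c x, hcf x⟩
  refine ⟨a, fun y => ?_, hfa⟩
  obtain ⟨x, hx⟩ := hc.ge (mem_range_self f y)
  exact ⟨x, hf (by rw [← hx, ← hfa]; rfl)⟩

theorem range_comp_subtype_ker_comp {g : B →ₗ[R] C} {p : P →ₗ[R] B} (hp : Surjective p) :
    range (p ∘ₗ (ker (g ∘ₗ p)).subtype) = ker g := by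
  rw [range_comp, Submodule.range_subtype, ker_comp, Submodule.map_comap_eq_of_surjective hp]

theorem isSES_ker_ker_coprod_ker_comp {c : G →ₗ[R] B} {g : B →ₗ[R] C} (hcg : Exact c g)
    (p : P →ₗ[R] B) :
    IsSES (ModuleCat.of R (ker c)) (ModuleCat.of R (ker (c.coprod p)))
      (ModuleCat.of R (ker (g ∘ₗ p))) := by
  have hα : ∀ u ∈ ker c, inl R G P u ∈ ker (c.coprod p) := by simp
  have hβ : ∀ x ∈ ker (c.coprod p), snd R G P x ∈ ker (g ∘ₗ p) := by
    rintro ⟨u, v⟩ hx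
    have hx : p v = -c u := eq_neg_of_add_eq_zero_right (by simpa using hx)
    simp [hx, hcg.apply_apply_eq_zero]
  refine isSES_of_linearMap ((inl R G P).restrict hα) ((snd R G P).restrict hβ) ?_ ?_ ?_
  · intro u u' h
    exact Subtype.ext (congrArg (fun x : ker (c.coprod p) => (x : G × P).1) h)
  · rintro ⟨v, hv⟩
    obtain ⟨u, hu⟩ := (hcg (p v)).mp hv
    exact ⟨⟨(-u, v), by simp [hu]⟩, rfl⟩
  · rintro ⟨⟨u, v⟩, hx⟩
    constructor
    · intro h
      have hv : v = 0 := congrArg Subtype.val h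
      subst hv
      exact ⟨⟨u, by simpa using hx⟩, rfl⟩
    · rintro ⟨u', hu'⟩
      rw [← hu']
      rfl

end LinearAlgebra

section FDim

variable {R : Type u} [Ring R] {F : ModuleCat.{u} R → Prop}

theorem isSES_self_of_subsingleton (M : ModuleCat.{u} R) [Subsingleton M] : IsSES M M M :=
  ⟨𝟙 M, 𝟙 M, fun _ _ _ => Subsingleton.elim _ _, fun y => ⟨y, rfl⟩,
    fun y => ⟨fun _ => ⟨y, rfl⟩, fun _ => Subsingleton.elim _ _⟩⟩

theorem FDimLE.of_subsingleton (n : ℕ) (M : ModuleCat.{u} R) [Subsingleton M] :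
    FDimLE F n M := by
  induction n with
  | zero => exact Or.inr ‹_›
  | succ n ih => exact ⟨M, M, Or.inr ‹_›, isSES_self_of_subsingleton M, ih⟩

theorem FDimLE.succ_of_memF0 {n : ℕ} {M : ModuleCat.{u} R} (hM : MemF0 F M) :
    FDimLE F (n + 1) M :=
  ⟨_, M, hM, isSES_ker LinearMap.id surjective_id, .of_subsingleton n _⟩

theorem FDimLE.succ {n : ℕ} {M : ModuleCat.{u} R} (h : FDimLE F n M) : FDimLE F (n + 1) M := by
  induction n generalizing M with
  | zero => exact .succ_of_memF0 h
  | succ n ih =>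
    obtain ⟨K, G, hG, hKGM, hK⟩ := h
    exact ⟨K, G, hG, hKGM, ih hK⟩

theorem HasFRes.exists_isSES {M : ModuleCat.{u} R} (h : HasFRes F M) :
    ∃ G N : ModuleCat.{u} R, MemF0 F G ∧ IsSES N G M ∧ HasFRes F N := by
  obtain ⟨K, Fo, rfl, h⟩ := h
  exact ⟨Fo 0, K 1, (h 0).1, (h 0).2, fun n => K (n + 1), fun n => Fo (n + 1), rfl,
    fun n => h (n + 1)⟩

theorem HasFRes.of_forall_exists {S : ModuleCat.{u} R → Prop}
    (hS : ∀ M, S M → ∃ G N : ModuleCat.{u} R, MemF0 F G ∧ IsSES N G M ∧ S N)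
    {M : ModuleCat.{u} R} (hM : S M) : HasFRes F M := by
  choose G N hG hGN hN using hS
  let T : ℕ → {M // S M} := fun n => Nat.rec ⟨M, hM⟩ (fun _ X => ⟨N X.1 X.2, hN X.1 X.2⟩) n
  exact ⟨fun n => (T n).1, fun n => G (T n).1 (T n).2, rfl, fun n => ⟨hG _ _, hGN _ _⟩⟩

theorem FDimLE.hasFRes {n : ℕ} {M : ModuleCat.{u} R} (h : FDimLE F n M) : HasFRes F M :=
  HasFRes.of_forall_exists (S := fun M => ∃ n, FDimLE F n M)
    (fun _ ⟨_, hM⟩ => have ⟨K, G, hG, hKGM, hK⟩ := hM.succ; ⟨G, K, hG, hKGM, _, hK⟩) ⟨n, h⟩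

theorem IsFKernel.extend {j : ℕ} {X M N G : ModuleCat.{u} R} (hM : IsFKernel F j M X)
    (hG : F G) (hNGM : IsSES N G M) : IsFKernel F (j + 1) N X := by
  induction j generalizing X with
  | zero =>
    obtain ⟨G₀, hG₀, hMG₀X⟩ := hM
    exact ⟨M, G₀, hG₀, hMG₀X, G, hG, hNGM⟩
  | succ j ih =>
    obtain ⟨K, G₀, hG₀, hKG₀X, hK⟩ := hM
    exact ⟨K, G₀, hG₀, hKG₀X, ih hK⟩

theorem FDimLE.of_isFKernel (hF : DefinesHomDim F) {n j : ℕ} {X M : ModuleCat.{u} R}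
    (hX : FDimLE F (j + n + 1) X) (hM : IsFKernel F j M X) (hMres : HasFRes F M) :
    FDimLE F n M := by
  induction n generalizing j M with
  | zero => exact Or.inl (hF.2 j M X hX hM)
  | succ n ih =>
    obtain ⟨G, N, hG, hNGM, hN⟩ := hMres.exists_isSES
    rcases hG with hG | hG
    · refine ⟨N, G, Or.inl hG, hNGM, ih (j := j + 1) ?_ (hM.extend hG hNGM) hN⟩
      convert hX using 2
      omega
    · obtain ⟨_, q, _, hq, _⟩ := hNGM
      have : Subsingleton M := hq.subsingleton
      exact .of_subsingleton _ M

theorem FDimLE.of_isSES_of_succ (hF : DefinesHomDim F) {n : ℕ} {M G X : ModuleCat.{u} R}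
    (hG : F G) (hMGX : IsSES M G X) (hX : FDimLE F (n + 1) X) : FDimLE F n M :=
  FDimLE.of_isFKernel hF (j := 0) (by rwa [Nat.zero_add]) ⟨G, hG, hMGX⟩
    (hF.1 M G X hG hMGX hX.hasFRes)

theorem IsSES.subsingleton_or_isImageOfF (hF : DefinesHomDim F) {A B C : ModuleCat.{u} R}
    (h : IsSES A B C) (hB : HasFRes F B) (hC : HasFRes F C) :
    Subsingleton A ∨ IsImageOfF F A := by
  obtain ⟨f, g, hf, hg, hfg⟩ := h
  obtain ⟨P, -, hP, ⟨-, p, -, hp, -⟩, -⟩ := hB.exists_isSES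
  rcases hP with hP | hP
  swap
  · have : Subsingleton B := hp.subsingleton
    exact Or.inl hf.subsingleton
  obtain ⟨G, -, hG, ⟨-, q, -, hq, -⟩, -⟩ :=
    (hF.1 _ _ _ hP (isSES_ker (g.hom ∘ₗ p.hom) (hg.comp hp)) hC).exists_isSES
  obtain ⟨a, ha, -⟩ := exists_surjective_comp_eq_of_range_eq
    (c := p.hom ∘ₗ (ker (g.hom ∘ₗ p.hom)).subtype) hf
    (by rw [range_comp_subtype_ker_comp hp, hfg.linearMap_ker_eq])
  rcases hG with hG | hG
  · exact Or.inr ⟨G, hG, ModuleCat.ofHom (a ∘ₗ q.hom), ha.comp hq⟩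
  · exact Or.inl (ha.comp hq).subsingleton

theorem FDimLE.of_isSES_left (hF : DefinesHomDim F) (hsum : ClosedUnderFinSums F) {i : ℕ}
    {A B C : ModuleCat.{u} R} (h : IsSES A B C) (hB : FDimLE F i B) (hC : FDimLE F i C) :
    FDimLE F i A := by
  induction i generalizing A B C with
  | zero =>
    obtain ⟨f, g, hf, hg, hfg⟩ := h
    rcases hB with hB | hB
    · exact Or.inl (hF.2 0 A C hC.succ ⟨B, hB, f, g, hf, hg, hfg⟩)
    · exact Or.inr hf.subsingleton
  | succ n ih =>
    rcases h.subsingleton_or_isImageOfF hF hB.hasFRes hC.hasFRes with hA | ⟨G, hG, a, ha⟩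
    · exact .of_subsingleton _ A
    obtain ⟨f, g, hf, hg, hfg⟩ := h
    obtain ⟨-, P, hP, ⟨-, p, -, hp, -⟩, -⟩ := id hB
    rcases hP with hP | hP
    swap
    · have : Subsingleton B := hp.subsingleton
      have : Subsingleton A := hf.subsingleton
      exact .of_subsingleton _ A
    have hc : Exact (f.hom ∘ₗ a.hom) g.hom := ha.comp_exact_iff_exact.mpr hfg
    have hcp : Surjective ((f.hom ∘ₗ a.hom).coprod p.hom) := fun b =>
      have ⟨v, hv⟩ := hp b
      ⟨(0, v), by simpa using hv⟩
    have hW := FDimLE.of_isSES_of_succ hF (hsum G P hG hP) (isSES_ker _ hcp) hB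
    have hA' := FDimLE.of_isSES_of_succ hF hP (isSES_ker (g.hom ∘ₗ p.hom) (hg.comp hp)) hC
    have hK := ih (isSES_ker_ker_coprod_ker_comp hc p.hom) hW hA'
    rw [ker_comp_of_ker_eq_bot _ (ker_eq_bot.mpr hf)] at hK
    exact ⟨_, G, Or.inl hG, isSES_ker a.hom ha, hK⟩

end FDim

theorem stmt4 {R : Type u} [Ring R] (F : ModuleCat.{u} R → Prop)
    (hF : DefinesHomDim F) (hsum : ClosedUnderFinSums F)
    (A B C : ModuleCat.{u} R) (f : A ⟶ B) (g : B ⟶ C)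
    (hinj : Function.Injective f) (hsurj : Function.Surjective g)
    (hex : Function.Exact f g) (i : ℕ)
    (hB : FDimLE F i B) (hC : FDimLE F i C) :
    FDimLE F i A :=
  FDimLE.of_isSES_left hF hsum ⟨f, g, hinj, hsurj, hex⟩ hB hC
end

section
/- Let R be a ring and F a class of left R-modules defining a homological dimension and containing all projective modules. Then F^{⊥_1} = F^{⊥_∞}, i.e., if Ext^1_R(F, M) = 0 for all F ∈ F, then Ext^i_R(F, M) = 0 for all i ≥ 1 and all F ∈ F. -/
open CategoryTheory

universe u

/-!
Let `F ∈ 𝓕` and let `0 → K → P → F → 0` with `P` projective. Then `P ∈ 𝓕`, and `K ∈ 𝓕` because a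
class defining a homological dimension is closed under kernels of epimorphisms (condition (2) with
`n = 0`, as `F` has `𝓕`-dimension `≤ 1`). Splicing a projective resolution of `K` with `P → F`
gives `Ext^{n+2}(F, M) ≅ Ext^{n+1}(K, M)`, so the vanishing of `Ext^1(-, M)` on `𝓕` propagates to
all `Ext^i(-, M)`, `i ≥ 1`, by induction on `i`.
-/

open Limits

namespace CategoryTheory.ProjectiveResolution

variable {C : Type*} [Category* C] [Abelian C]

/-- `Q.π` read as a morphism `Q₀ ⟶ Z`, avoiding the object `((single₀ C).obj Z).X 0`. -/
noncomputable def augmentation {Z : C} (Q : ProjectiveResolution Z) : Q.complex.X 0 ⟶ Z :=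
  (ChainComplex.toSingle₀Equiv _ _ Q.π).1

lemma d_comp_augmentation {Z : C} (Q : ProjectiveResolution Z) :
    Q.complex.d 1 0 ≫ Q.augmentation = 0 :=
  (ChainComplex.toSingle₀Equiv _ _ Q.π).2

instance {Z : C} (Q : ProjectiveResolution Z) : Epi Q.augmentation :=
  inferInstanceAs (Epi (Q.π.f 0))

lemma exact_augmentation {Z : C} (Q : ProjectiveResolution Z) :
    (ShortComplex.mk _ _ Q.d_comp_augmentation).Exact :=
  Q.exact₀

variable {P X : C} (π : P ⟶ X) (Q : ProjectiveResolution (kernel π))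

lemma d_comp_augmentation_comp_kernel_ι :
    Q.complex.d 1 0 ≫ Q.augmentation ≫ kernel.ι π = 0 := by
  rw [reassoc_of% Q.d_comp_augmentation, zero_comp]

lemma augmentation_comp_kernel_ι_comp : (Q.augmentation ≫ kernel.ι π) ≫ π = 0 := by
  simp

lemma exact_augmentation_comp_kernel_ι :
    (ShortComplex.mk _ _ (augmentation_comp_kernel_ι_comp π Q)).Exact := by
  let φ : ShortComplex.mk _ _ (augmentation_comp_kernel_ι_comp π Q) ⟶
      ShortComplex.mk _ _ (kernel.condition π) :=
    { τ₁ := Q.augmentation, τ₂ := 𝟙 _, τ₃ := 𝟙 _ }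
  have : Epi φ.τ₁ := inferInstanceAs (Epi Q.augmentation)
  have : IsIso φ.τ₂ := inferInstanceAs (IsIso (𝟙 P))
  have : Mono φ.τ₃ := inferInstanceAs (Mono (𝟙 X))
  rw [ShortComplex.exact_iff_of_epi_of_isIso_of_mono φ]
  exact ShortComplex.exact_of_f_is_kernel _ (kernelIsKernel π)

lemma exact_d_one_zero_augmentation_comp_kernel_ι :
    (ShortComplex.mk _ _ (d_comp_augmentation_comp_kernel_ι π Q)).Exact := by
  let φ : ShortComplex.mk _ _ Q.d_comp_augmentation ⟶
      ShortComplex.mk _ _ (d_comp_augmentation_comp_kernel_ι π Q) :=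
    { τ₁ := 𝟙 _, τ₂ := 𝟙 _, τ₃ := kernel.ι π }
  have : Epi φ.τ₁ := inferInstanceAs (Epi (𝟙 (Q.complex.X 1)))
  have : IsIso φ.τ₂ := inferInstanceAs (IsIso (𝟙 (Q.complex.X 0)))
  have : Mono φ.τ₃ := inferInstanceAs (Mono (kernel.ι π))
  rw [← ShortComplex.exact_iff_of_epi_of_isIso_of_mono φ]
  exact Q.exact_augmentation

/-- The resolution `⋯ → Q₁ → Q₀ → P → X` spliced from `π` and a resolution `Q` of `kernel π`. -/
noncomputable def ofKernel [Projective P] [Epi π] : ProjectiveResolution X where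
  complex := Q.complex.augment _ (d_comp_augmentation_comp_kernel_ι π Q)
  projective
    | 0 => ‹Projective P›
    | n + 1 => Q.projective n
  π := (ChainComplex.toSingle₀Equiv _ _).symm ⟨π, augmentation_comp_kernel_ι_comp π Q⟩
  quasiIso := ⟨fun n => by
    cases n with
    | zero =>
      rw [ChainComplex.quasiIsoAt₀_iff, ShortComplex.quasiIso_iff_of_zeros']
      · refine (ShortComplex.exact_and_epi_g_iff_of_iso ?_).2
          ⟨exact_augmentation_comp_kernel_ι π Q, ‹Epi π›⟩
        exact ShortComplex.isoMk (Iso.refl _) (Iso.refl _) (Iso.refl _)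
          ((Category.id_comp _).trans (Category.comp_id _).symm)
          ((Category.id_comp _).trans ((ChainComplex.toSingle₀Equiv_symm_apply_f_zero
            (C := Q.complex.augment _ (d_comp_augmentation_comp_kernel_ι π Q)) π
            (augmentation_comp_kernel_ι_comp π Q)).symm.trans (Category.comp_id _).symm))
      all_goals rfl
    | succ n =>
      rw [quasiIsoAt_iff_exactAt' _ _ (ChainComplex.exactAt_succ_single_obj _ _),
        HomologicalComplex.exactAt_iff' _ (n + 2) (n + 1) n (by simp) (by simp)]
      cases n with
      | zero => exact exact_d_one_zero_augmentation_comp_kernel_ι π Q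
      | succ n => exact Q.exact_succ n⟩

end CategoryTheory.ProjectiveResolution

section DimensionShift

open Opposite

variable {S : Type*} [Ring S] {C : Type*} [Category* C] [Abelian C] [Linear S C]
  [EnoughProjectives C]

/-- The Hom complexes of `Q.ofKernel π` and of `Q` are the same complex shifted by one, in degrees
`≥ 1`; so their homologies agree there. -/
noncomputable def extSuccSuccIsoExtSuccKernel {P X : C} [Projective P] (π : P ⟶ X) [Epi π]
    (Y : C) (n : ℕ) :
    ((Ext S C (n + 2)).obj (op X)).obj Y ≅ ((Ext S C (n + 1)).obj (op (kernel π))).obj Y :=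
  let Q := ProjectiveResolution.of (kernel π)
  (Q.ofKernel π).isoExt (n + 2) Y ≪≫
    ((Q.ofKernel π).complex.linearYonedaObj S Y).homologyIsoSc' (n + 1) (n + 2) (n + 3)
      (ComplexShape.prev_eq' _ rfl) (ComplexShape.next_eq' _ rfl) ≪≫
    ((Q.complex.linearYonedaObj S Y).homologyIsoSc' n (n + 1) (n + 2)
      (ComplexShape.prev_eq' _ rfl) (ComplexShape.next_eq' _ rfl)).symm ≪≫
    (Q.isoExt (n + 1) Y).symm

end DimensionShift

section Modules

variable {R : Type u} [Ring R]

lemma extZero_succ_succ_iff {P X : ModuleCat.{u} R} [Projective P] (π : P ⟶ X) [Epi π]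
    (M : ModuleCat.{u} R) (n : ℕ) :
    ExtZero (n + 2) X M ↔ ExtZero (n + 1) (kernel π) M :=
  (extSuccSuccIsoExtSuccKernel π M n).toLinearEquiv.toEquiv.subsingleton_congr

lemma isSES_punit (X : ModuleCat.{u} R) : IsSES (ModuleCat.of R PUnit) X X :=
  ⟨0, 𝟙 X, fun _ _ _ => Subsingleton.elim _ _, fun x => ⟨x, rfl⟩, fun y => by simp [eq_comm]⟩

lemma isSES_kernel {B X : ModuleCat.{u} R} (g : B ⟶ X) [Epi g] : IsSES (kernel g) B X := by
  refine ⟨kernel.ι g, g, (ModuleCat.mono_iff_injective _).1 inferInstance,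
    (ModuleCat.epi_iff_surjective _).1 inferInstance, ?_⟩
  rw [← ShortComplex.ShortExact.moduleCat_exact_iff_function_exact
    (ShortComplex.mk (kernel.ι g) g (kernel.condition g))]
  exact ShortComplex.exact_of_f_is_kernel _ (kernelIsKernel g)

lemma DefinesHomDim.mem_of_isSES {F : ModuleCat.{u} R → Prop} (hF : DefinesHomDim F)
    {K A B : ModuleCat.{u} R} (hK : IsSES K A B) (hA : F A) (hB : F B) : F K :=
  hF.2 0 K B ⟨_, B, .inl hB, isSES_punit B, .inr inferInstance⟩ ⟨A, hA, hK⟩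

end Modules

theorem stmt10 {R : Type u} [Ring R] (F : ModuleCat.{u} R → Prop)
    (hF : DefinesHomDim F)
    (hproj : ∀ M : ModuleCat.{u} R, Module.Projective R M → F M)
    (M : ModuleCat.{u} R) (h1 : ∀ Fm, F Fm → ExtZero 1 Fm M) :
    ∀ i, 1 ≤ i → ∀ Fm, F Fm → ExtZero i Fm M := by
  have hker (Fm : ModuleCat.{u} R) (hFm : F Fm) : F (kernel (Projective.π Fm)) :=
    hF.mem_of_isSES (isSES_kernel _) (hproj _ inferInstance) hFm
  intro i hi
  induction i, hi using Nat.le_induction with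
  | base => exact h1
  | succ n hn ih =>
    intro Fm hFm
    obtain ⟨m, rfl⟩ := Nat.exists_eq_add_of_le' hn
    exact (extZero_succ_succ_iff (Projective.π Fm) M m).2 (ih _ (hker Fm hFm))
end

section
/- Over the ring of integers ℤ, the class of divisible abelian groups equals the class {D : Ext^i_ℤ(R, D) = 0 for all i ≥ 1 and all reduced abelian groups R}, and consequently the double orthogonal ^{⊥_∞}({reduced}^{⊥_∞}) of the class of reduced abelian groups is the class of all abelian groups. In particular, the class of reduced abelian groups is not of the form ^{⊥_∞}G for any class G of abelian groups. -/
open CategoryTheory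

universe u

/-- A divisible abelian group (`ℤ`-module). -/
def IsDivisibleGrp (D : ModuleCat.{0} ℤ) : Prop :=
  ∀ n : ℤ, n ≠ 0 → ∀ x : D, ∃ y : D, n • y = x

/-- A reduced abelian group: its only divisible subgroup is `0`. -/
def IsReducedGrp (M : ModuleCat.{0} ℤ) : Prop :=
  ∀ S : Submodule ℤ M, (∀ n : ℤ, n ≠ 0 → ∀ x ∈ S, ∃ y ∈ S, n • y = x) → S = ⊥


/-! Divisible groups are injective ℤ-modules (Baer's criterion), so `Ext^i(M, D)` vanishes for
every `M` and `i ≥ 1` once `D` is divisible. Conversely, each `ℤ/nℤ` (`n ≠ 0`) is reduced, and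
the resolution `0 → ℤ --n--> ℤ → ℤ/nℤ → 0` turns `Ext¹(ℤ/nℤ, D) = 0` into `nD = D`. Hence the
right orthogonal of the reduced groups consists of injectives, whose left orthogonal is
everything. If the reduced groups were `⊥G`, every member of `G` would be orthogonal to them,
hence divisible, and then the divisible nonzero group `ℚ` would be reduced. -/

open Limits

universe v

lemma Module.Injective.exists_comp_eq_of_ker_le {R : Type*} [Ring R] {M N : Type*} {Q : Type v}
    [AddCommGroup M] [AddCommGroup N] [AddCommGroup Q] [Module R M] [Module R N] [Module R Q]
    [Small.{v} R] [Module.Injective R Q] (f : M →ₗ[R] N) (g : M →ₗ[R] Q)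
    (h : LinearMap.ker f ≤ LinearMap.ker g) : ∃ ψ : N →ₗ[R] Q, ψ ∘ₗ f = g := by
  obtain ⟨ψ, hψ⟩ := Module.Injective.extension_property R Q _ N (LinearMap.range f).subtype
    (Submodule.injective_subtype _)
    ((LinearMap.ker f).liftQ g h ∘ₗ f.quotKerEquivRange.symm.toLinearMap)
  refine ⟨ψ, LinearMap.ext fun x => ?_⟩
  have := LinearMap.congr_fun hψ ⟨f x, LinearMap.mem_range_self f x⟩
  simpa [LinearMap.quotKerEquivRange_symm_apply_image] using this

section ExtViaResolution

variable {R : Type*} [Ring R] {C : Type*} [Category* C] [Abelian C] [Linear R C]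

lemma ChainComplex.linearYonedaObj_exactAt_succ_iff (K : ChainComplex C ℕ) (Y : C) (n : ℕ) :
    (K.linearYonedaObj R Y).ExactAt (n + 1) ↔
      ∀ φ : K.X (n + 1) ⟶ Y, K.d (n + 2) (n + 1) ≫ φ = 0 →
        ∃ ψ : K.X n ⟶ Y, K.d (n + 1) n ≫ ψ = φ := by
  rw [HomologicalComplex.exactAt_iff' _ n (n + 1) (n + 2) (by simp) (by simp),
    ShortComplex.moduleCat_exact_iff]
  rfl

lemma CategoryTheory.ProjectiveResolution.isZero_ext_iff_exactAt [EnoughProjectives C] {X : C}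
    (P : ProjectiveResolution X) (n : ℕ) (Y : C) :
    IsZero (((Ext R C n).obj (Opposite.op X)).obj Y) ↔
      (P.complex.linearYonedaObj R Y).ExactAt n := by
  rw [HomologicalComplex.exactAt_iff_isZero_homology]
  exact ⟨fun h => h.of_iso (P.isoExt n Y).symm, fun h => h.of_iso (P.isoExt n Y)⟩

end ExtViaResolution

theorem extZero_succ_of_injective {R : Type u} [Ring R] (X Y : ModuleCat.{u} R)
    [Module.Injective R Y] (n : ℕ) : ExtZero (n + 1) X Y := by
  let P := ProjectiveResolution.of X
  rw [ExtZero, ← ModuleCat.isZero_iff_subsingleton, P.isZero_ext_iff_exactAt,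
    ChainComplex.linearYonedaObj_exactAt_succ_iff]
  intro φ hφ
  have hker : LinearMap.ker (P.complex.d (n + 1) n).hom ≤ LinearMap.ker φ.hom := by
    intro x hx
    obtain ⟨y, rfl⟩ := (ShortComplex.moduleCat_exact_iff _).1 (P.exact_succ n) x hx
    exact congr($hφ y)
  obtain ⟨ψ, hψ⟩ := Module.Injective.exists_comp_eq_of_ker_le _ _ hker
  exact ⟨ModuleCat.ofHom ψ, ModuleCat.hom_ext hψ⟩

namespace CategoryTheory.ShortComplex

open ZeroObject

variable {C : Type*} [Category* C] [Abelian C] (S : ShortComplex C)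

noncomputable def twoTermChainComplex : ChainComplex C ℕ :=
  ChainComplex.of (fun | 0 => S.X₂ | 1 => S.X₁ | _ + 2 => 0) (fun | 0 => S.f | _ + 1 => 0)
    (by rintro (_ | _) <;> simp)

lemma twoTermChainComplex_d_one_zero : S.twoTermChainComplex.d 1 0 = S.f := by
  simp [twoTermChainComplex, ChainComplex.of, ChainComplex.of.d]

lemma isZero_twoTermChainComplex_X (n : ℕ) : IsZero (S.twoTermChainComplex.X (n + 2)) :=
  isZero_zero C

instance [Projective S.X₁] [Projective S.X₂] (n : ℕ) :
    Projective (S.twoTermChainComplex.X n) :=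
  match n with
  | 0 => inferInstanceAs (Projective S.X₂)
  | 1 => inferInstanceAs (Projective S.X₁)
  | n + 2 => (S.isZero_twoTermChainComplex_X n).projective

variable {S}

noncomputable def ShortExact.projectiveResolution (hS : S.ShortExact) [Projective S.X₁]
    [Projective S.X₂] : ProjectiveResolution S.X₃ where
  complex := S.twoTermChainComplex
  π := (ChainComplex.toSingle₀Equiv _ _).symm
    ⟨S.g, by rw [twoTermChainComplex_d_one_zero]; exact S.zero⟩
  quasiIso := ⟨fun n => by
    cases n with
    | zero =>
      rw [ChainComplex.quasiIsoAt₀_iff, ShortComplex.quasiIso_iff_of_zeros']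
      · refine (ShortComplex.exact_and_epi_g_iff_of_iso ?_).2 ⟨hS.exact, hS.epi_g⟩
        refine ShortComplex.isoMk (Iso.refl _) (Iso.refl _) (Iso.refl _) ?_ ?_
        · dsimp
          erw [Category.id_comp, Category.comp_id]
          exact (twoTermChainComplex_d_one_zero S).symm
        · dsimp
          erw [Category.id_comp, Category.comp_id]
          exact (ChainComplex.toSingle₀Equiv_symm_apply_f_zero
            (C := S.twoTermChainComplex) S.g _).symm
      all_goals rfl
    | succ n =>
      rw [quasiIsoAt_iff_exactAt' _ _ (ChainComplex.exactAt_succ_single_obj _ _),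
        HomologicalComplex.exactAt_iff' _ (n + 2) (n + 1) n (by simp) (by simp)]
      match n with
      | 0 =>
        have := hS.mono_f
        rw [ShortComplex.exact_iff_mono _ ((S.isZero_twoTermChainComplex_X 0).eq_of_src _ _)]
        simpa [twoTermChainComplex_d_one_zero]
      | n + 1 => exact ShortComplex.exact_of_isZero_X₂ _ (S.isZero_twoTermChainComplex_X n)⟩

lemma ShortExact.exists_comp_eq_of_isZero_ext_one {R : Type*} [Ring R] [Linear R C]
    [EnoughProjectives C] (hS : S.ShortExact) [Projective S.X₁] [Projective S.X₂] {Y : C}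
    (hY : IsZero (((Ext R C 1).obj (Opposite.op S.X₃)).obj Y)) (φ : S.X₁ ⟶ Y) :
    ∃ ψ : S.X₂ ⟶ Y, S.f ≫ ψ = φ := by
  rw [hS.projectiveResolution.isZero_ext_iff_exactAt,
    ChainComplex.linearYonedaObj_exactAt_succ_iff (n := 0)] at hY
  obtain ⟨ψ, hψ⟩ := hY φ ((S.isZero_twoTermChainComplex_X 0).eq_of_src _ _)
  refine ⟨ψ, ?_⟩
  rwa [← twoTermChainComplex_d_one_zero]

end CategoryTheory.ShortComplex

section RightRegular

variable {R : Type u} [Ring R] (r : R)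

noncomputable abbrev ModuleCat.quotSpanSingletonShortComplex : ShortComplex (ModuleCat.{u} R) :=
  ShortComplex.mk (ModuleCat.ofHom (LinearMap.toSpanSingleton R R r))
    (ModuleCat.ofHom (Submodule.span R {r}).mkQ) (by ext; simp)

lemma ModuleCat.quotSpanSingletonShortComplex_shortExact (hr : IsRightRegular r) :
    (ModuleCat.quotSpanSingletonShortComplex r).ShortExact := by
  refine ModuleCat.shortComplex_shortExact _ ?_ ?_ (Submodule.mkQ_surjective _)
  · show Function.Exact (LinearMap.toSpanSingleton R R r) (Submodule.span R {r}).mkQ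
    rw [LinearMap.exact_iff, Submodule.ker_mkQ, LinearMap.span_singleton_eq_range]
  · show Function.Injective (LinearMap.toSpanSingleton R R r)
    intro a b h
    exact hr (by simpa using h)

theorem exists_smul_eq_of_extZero_one {r : R} (hr : IsRightRegular r) {Y : ModuleCat.{u} R}
    (hY : ExtZero 1 (ModuleCat.of R (R ⧸ Submodule.span R {r})) Y) (y : Y) :
    ∃ z : Y, r • z = y := by
  obtain ⟨ψ, hψ⟩ :=
    (ModuleCat.quotSpanSingletonShortComplex_shortExact r hr).exists_comp_eq_of_isZero_ext_one
      (ModuleCat.isZero_iff_subsingleton.2 hY) (ModuleCat.ofHom (LinearMap.toSpanSingleton R Y y))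
  refine ⟨ψ 1, ?_⟩
  simpa [← map_smul] using congr($hψ (1 : R))

end RightRegular

lemma isReducedGrp_of_forall_smul_eq_zero {M : ModuleCat.{0} ℤ} {n : ℤ} (hn : n ≠ 0)
    (h : ∀ x : M, n • x = 0) : IsReducedGrp M := by
  intro S hS
  rw [eq_bot_iff]
  intro x hx
  obtain ⟨y, -, rfl⟩ := hS n hn x hx
  simp [h y]

lemma isReducedGrp_quotient_span_singleton {n : ℤ} (hn : n ≠ 0) :
    IsReducedGrp (ModuleCat.of ℤ (ℤ ⧸ Submodule.span ℤ {n})) := by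
  refine isReducedGrp_of_forall_smul_eq_zero hn fun x => ?_
  obtain ⟨a, rfl⟩ := Submodule.Quotient.mk_surjective _ x
  rw [← Submodule.Quotient.mk_smul, Submodule.Quotient.mk_eq_zero]
  exact Submodule.mem_span_singleton.mpr ⟨a, mul_comm a n⟩

lemma IsDivisibleGrp.not_isReducedGrp {M : ModuleCat.{0} ℤ} [Nontrivial M]
    (hM : IsDivisibleGrp M) : ¬ IsReducedGrp M := fun hR =>
  top_ne_bot (hR ⊤ fun n hn x _ => (hM n hn x).imp fun _ hy => ⟨trivial, hy⟩)

lemma isDivisibleGrp_rat : IsDivisibleGrp (ModuleCat.of ℤ ℚ) := fun n hn x =>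
  ⟨(x : ℚ) / n, by rw [zsmul_eq_mul]; field_simp⟩

theorem IsDivisibleGrp.injective {D : ModuleCat.{0} ℤ} (hD : IsDivisibleGrp D) :
    Module.Injective ℤ D := by
  let _ : DivisibleBy D ℤ := divisibleByOfSMulRightSurj D ℤ fun hn x => hD _ hn x
  -- `Module.Baer.of_divisible` is about the canonical `ℤ`-module structure, not `D.isModule`.
  convert @Module.Baer.injective ℤ _ D _ (AddCommGroup.toIntModule D) (Module.Baer.of_divisible D)
  exact Subsingleton.elim _ _

lemma IsDivisibleGrp.extZero {D : ModuleCat.{0} ℤ} (hD : IsDivisibleGrp D) (M : ModuleCat.{0} ℤ)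
    {i : ℕ} (hi : 1 ≤ i) : ExtZero i M D := by
  have := hD.injective
  obtain ⟨j, rfl⟩ := Nat.exists_eq_add_of_le' hi
  exact extZero_succ_of_injective M D j

lemma IsDivisibleGrp.of_forall_extZero_one {D : ModuleCat.{0} ℤ}
    (hD : ∀ M : ModuleCat.{0} ℤ, IsReducedGrp M → ExtZero 1 M D) : IsDivisibleGrp D :=
  fun n hn x => by
    obtain ⟨y, hy⟩ := exists_smul_eq_of_extZero_one
      (IsRegular.of_ne_zero hn).right (hD _ (isReducedGrp_quotient_span_singleton hn)) x
    exact ⟨y, (int_smul_eq_zsmul D.isModule n y).symm.trans hy⟩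

theorem isDivisibleGrp_iff_forall_extZero_of_isReducedGrp (D : ModuleCat.{0} ℤ) :
    IsDivisibleGrp D ↔ ∀ i, 1 ≤ i → ∀ M : ModuleCat.{0} ℤ, IsReducedGrp M → ExtZero i M D :=
  ⟨fun hD _ hi M _ => hD.extZero M hi,
    fun h => .of_forall_extZero_one fun M hM => h 1 le_rfl M hM⟩

theorem stmt15 :
    (∀ D : ModuleCat.{0} ℤ, IsDivisibleGrp D ↔
      ∀ i, 1 ≤ i → ∀ Rm : ModuleCat.{0} ℤ, IsReducedGrp Rm → ExtZero i Rm D) ∧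
    (∀ M C : ModuleCat.{0} ℤ,
      (∀ i, 1 ≤ i → ∀ Rm : ModuleCat.{0} ℤ, IsReducedGrp Rm → ExtZero i Rm C) →
      ∀ i, 1 ≤ i → ExtZero i M C) ∧
    ¬ ∃ G : ModuleCat.{0} ℤ → Prop, ∀ M : ModuleCat.{0} ℤ,
      IsReducedGrp M ↔ (∀ i, 1 ≤ i → ∀ g, G g → ExtZero i M g) := by
  refine ⟨isDivisibleGrp_iff_forall_extZero_of_isReducedGrp, fun M C hC _ hi =>
    ((isDivisibleGrp_iff_forall_extZero_of_isReducedGrp C).2 hC).extZero M hi, ?_⟩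
  rintro ⟨G, hG⟩
  have hG_divisible : ∀ g, G g → IsDivisibleGrp g := fun g hg =>
    (isDivisibleGrp_iff_forall_extZero_of_isReducedGrp g).2 fun i hi M hM => (hG M).1 hM i hi g hg
  exact isDivisibleGrp_rat.not_isReducedGrp
    ((hG _).2 fun i hi g hg => (hG_divisible g hg).extZero _ hi)
end

section
/- Let R be a commutative noetherian ring and M a finitely generated R-module in the G-class G(R). Then for any short exact sequence 0 → K → P → M → 0 with P finitely generated projective, K belongs to G(R). -/
open CategoryTheory

universe u

/-- The Auslander `G`-class `G(R)`. -/
def GClass {R : Type u} [CommRing R] (M : ModuleCat.{u} R) : Prop :=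
  Module.Finite R M ∧
  (∀ m : ℕ, 0 < m → ExtZero m M (ModuleCat.of R R)) ∧
  (∀ m : ℕ, 0 < m → ExtZero m (ModuleCat.of R (Module.Dual R M)) (ModuleCat.of R R)) ∧
  Function.Bijective (Module.Dual.eval R M)

/-!
Dualising `0 → K → P → M → 0` gives `0 → M* → P* → K* → 0`, exact on the right because
`Ext¹(M, R) = 0` lets every functional on `K` extend to `P`. Dimension shifting along the two
sequences gives `Ext^m(K, R) ≅ Ext^{m+1}(M, R)` and `Ext^{m+1}(K*, R) ≅ Ext^m(M*, R)` for `m ≥ 1`,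
while `Ext¹(K*, R) = 0` because every functional on `M*` is evaluation at some `g x` and thus
extends to `P*`. Reflexivity of `K` is a chase in the double-dual square, using that `P* → K*` is
onto and `M → M**` is injective.

The `Ext` of `ExtZero` is the left-derived-functor `Ext`; the long exact sequences are available
for the derived-category `Abelian.Ext`, and both vanish exactly when every cocycle of a
projective resolution is a coboundary.
-/

namespace CategoryTheory

variable {C : Type*} [Category C] [Abelian C]

namespace ProjectiveResolution

variable {X : C} (P : ProjectiveResolution X) (N : C) (n : ℕ)

lemma subsingleton_ext_succ_iff_forall_exists_d_comp [HasExt C] :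
    Subsingleton (Abelian.Ext X N (n + 1)) ↔
      ∀ ψ : P.complex.X (n + 1) ⟶ N, P.complex.d (n + 2) (n + 1) ≫ ψ = 0 →
        ∃ χ : P.complex.X n ⟶ N, P.complex.d (n + 1) n ≫ χ = ψ := by
  refine ⟨fun _ ψ hψ ↦ ?_, fun h ↦ subsingleton_of_forall_eq 0 fun α ↦ ?_⟩
  · exact (P.extMk_eq_zero_iff ψ (n + 2) rfl hψ n rfl).1 (Subsingleton.elim _ _)
  · obtain ⟨ψ, hψ, rfl⟩ := P.extMk_surjective α (n + 2) rfl
    exact (P.extMk_eq_zero_iff ψ (n + 2) rfl hψ n rfl).2 (h ψ hψ)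

lemma subsingleton_leftDerivedExt_succ_iff_forall_exists_d_comp [EnoughProjectives C] :
    Subsingleton (((Ext ℤ C (n + 1)).obj (Opposite.op X)).obj N) ↔
      ∀ ψ : P.complex.X (n + 1) ⟶ N, P.complex.d (n + 2) (n + 1) ≫ ψ = 0 →
        ∃ χ : P.complex.X n ⟶ N, P.complex.d (n + 1) n ≫ χ = ψ := by
  rw [← ModuleCat.isZero_iff_subsingleton, (P.isoExt (n + 1) N).isZero_iff,
    ← HomologicalComplex.exactAt_iff_isZero_homology,
    HomologicalComplex.exactAt_iff' _ n (n + 1) (n + 2) (by simp) (by simp),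
    ShortComplex.moduleCat_exact_iff]
  rfl

end ProjectiveResolution

lemma subsingleton_leftDerivedExt_succ_iff_subsingleton_ext [EnoughProjectives C] [HasExt C]
    (X N : C) (n : ℕ) :
    Subsingleton (((Ext ℤ C (n + 1)).obj (Opposite.op X)).obj N) ↔
      Subsingleton (Abelian.Ext X N (n + 1)) := by
  let P := ProjectiveResolution.of X
  rw [P.subsingleton_leftDerivedExt_succ_iff_forall_exists_d_comp,
    P.subsingleton_ext_succ_iff_forall_exists_d_comp]

namespace ShortComplex.ShortExact

variable [HasExt C] {S : ShortComplex C} (hS : S.ShortExact) [Projective S.X₂] (N : C)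
include hS

lemma subsingleton_ext_succ_succ_iff (n : ℕ) :
    Subsingleton (Abelian.Ext S.X₃ N (n + 2)) ↔ Subsingleton (Abelian.Ext S.X₁ N (n + 1)) := by
  refine ⟨fun _ ↦ subsingleton_of_forall_eq 0 fun x₁ ↦ ?_,
    fun _ ↦ subsingleton_of_forall_eq 0 fun x₃ ↦ ?_⟩
  · obtain ⟨x₂, rfl⟩ := Abelian.Ext.contravariant_sequence_exact₁ hS N x₁ (n₁ := n + 2)
      (by omega) (Subsingleton.elim _ _)
    rw [Abelian.Ext.eq_zero_of_projective x₂, Abelian.Ext.comp_zero]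
  · obtain ⟨x₁, rfl⟩ := Abelian.Ext.contravariant_sequence_exact₃ hS N x₃
      (Abelian.Ext.eq_zero_of_projective _) (n₀ := n + 1) (by omega)
    rw [Subsingleton.elim x₁ 0, Abelian.Ext.comp_zero]

lemma subsingleton_ext_one_iff :
    Subsingleton (Abelian.Ext S.X₃ N 1) ↔ ∀ φ : S.X₁ ⟶ N, ∃ χ : S.X₂ ⟶ N, S.f ≫ χ = φ := by
  refine ⟨fun _ φ ↦ ?_, fun h ↦ subsingleton_of_forall_eq 0 fun x₃ ↦ ?_⟩
  · obtain ⟨x₂, hx₂⟩ := Abelian.Ext.contravariant_sequence_exact₁ hS N (Abelian.Ext.mk₀ φ)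
      (zero_add 1) (Subsingleton.elim _ _)
    obtain ⟨χ, rfl⟩ := (Abelian.Ext.mk₀_bijective _ _).2 x₂
    rw [Abelian.Ext.mk₀_comp_mk₀] at hx₂
    exact ⟨χ, (Abelian.Ext.mk₀_bijective _ _).1 hx₂⟩
  · obtain ⟨x₁, rfl⟩ := Abelian.Ext.contravariant_sequence_exact₃ hS N x₃
      (Abelian.Ext.eq_zero_of_projective _) (add_zero 1)
    obtain ⟨φ, rfl⟩ := (Abelian.Ext.mk₀_bijective _ _).2 x₁
    obtain ⟨χ, rfl⟩ := h φ
    rw [← Abelian.Ext.mk₀_comp_mk₀, hS.extClass_comp_assoc]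

end ShortComplex.ShortExact

end CategoryTheory

namespace CategoryTheory.ShortComplex.ShortExact

variable {R : Type u} [Ring R] {S : ShortComplex (ModuleCat.{u} R)} (hS : S.ShortExact)
  [Projective S.X₂] (N : ModuleCat.{u} R)
include hS

lemma extZero_succ_succ_iff (n : ℕ) : ExtZero (n + 2) S.X₃ N ↔ ExtZero (n + 1) S.X₁ N := by
  rw [ExtZero, ExtZero, subsingleton_leftDerivedExt_succ_iff_subsingleton_ext,
    subsingleton_leftDerivedExt_succ_iff_subsingleton_ext, hS.subsingleton_ext_succ_succ_iff]

lemma extZero_one_iff : ExtZero 1 S.X₃ N ↔ ∀ φ : S.X₁ ⟶ N, ∃ χ : S.X₂ ⟶ N, S.f ≫ χ = φ := by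
  rw [ExtZero, subsingleton_leftDerivedExt_succ_iff_subsingleton_ext, hS.subsingleton_ext_one_iff]

lemma forall_extZero_pos_X₁ (h : ∀ m, 0 < m → ExtZero m S.X₃ N) :
    ∀ m, 0 < m → ExtZero m S.X₁ N
  | n + 1, _ => (hS.extZero_succ_succ_iff N n).1 (h _ (n + 1).succ_pos)

lemma forall_extZero_pos_X₃ (hlift : ∀ φ : S.X₁ ⟶ N, ∃ χ : S.X₂ ⟶ N, S.f ≫ χ = φ)
    (h : ∀ m, 0 < m → ExtZero m S.X₁ N) : ∀ m, 0 < m → ExtZero m S.X₃ N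
  | 1, _ => (hS.extZero_one_iff N).2 hlift
  | n + 2, _ => (hS.extZero_succ_succ_iff N n).2 (h _ n.succ_pos)

end CategoryTheory.ShortComplex.ShortExact

section Duality

open Module

variable {R : Type u} [CommRing R]

lemma ModuleCat.forall_exists_comp_eq_iff_surjective_dualMap {A Q : ModuleCat.{u} R}
    (v : A ⟶ Q) :
    (∀ φ : A ⟶ ModuleCat.of R R, ∃ χ : Q ⟶ ModuleCat.of R R, v ≫ χ = φ) ↔
      Function.Surjective v.hom.dualMap := by
  refine ⟨fun h l ↦ ?_, fun h φ ↦ ?_⟩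
  · obtain ⟨χ, hχ⟩ := h (ModuleCat.ofHom l)
    exact ⟨χ.hom, congrArg ModuleCat.Hom.hom hχ⟩
  · obtain ⟨χ, hχ⟩ := h φ.hom
    exact ⟨ModuleCat.ofHom χ, ModuleCat.hom_ext hχ⟩

variable {K P M : Type*} [AddCommGroup K] [Module R K] [AddCommGroup P] [Module R P]
  [AddCommGroup M] [Module R M] {f : K →ₗ[R] P} {g : P →ₗ[R] M}

lemma Function.Exact.dualMap (hfg : Function.Exact f g) (hg : Function.Surjective g) :
    Function.Exact g.dualMap f.dualMap := by
  rw [LinearMap.exact_iff, LinearMap.ker_dualMap_eq_dualAnnihilator_range,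
    LinearMap.range_dualMap_eq_dualAnnihilator_ker_of_surjective g hg,
    LinearMap.exact_iff.1 hfg]

lemma LinearMap.dualMap_dualMap_surjective (hg : Function.Surjective g)
    (hM : Function.Surjective (Dual.eval R M)) : Function.Surjective g.dualMap.dualMap := by
  intro φ
  obtain ⟨m, rfl⟩ := hM φ
  obtain ⟨x, rfl⟩ := hg m
  exact ⟨Dual.eval R P x, LinearMap.congr_fun (Dual.eval_naturality g) x⟩

lemma bijective_dual_eval_of_exact (hf : Function.Injective f) (hfg : Function.Exact f g)
    (hf' : Function.Surjective f.dualMap) (hP : Function.Bijective (Dual.eval R P))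
    (hM : Function.Injective (Dual.eval R M)) : Function.Bijective (Dual.eval R K) := by
  have eval_f (k : K) : f.dualMap.dualMap (Dual.eval R K k) = Dual.eval R P (f k) :=
    LinearMap.congr_fun (Dual.eval_naturality f) k
  have eval_g (q : P) : g.dualMap.dualMap (Dual.eval R P q) = Dual.eval R M (g q) :=
    LinearMap.congr_fun (Dual.eval_naturality g) q
  have hf'' : Function.Injective f.dualMap.dualMap := LinearMap.dualMap_injective_of_surjective hf'
  refine ⟨fun a b h ↦ hf (hP.1 (by rw [← eval_f, ← eval_f, h])), fun x ↦ ?_⟩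
  obtain ⟨q, hq⟩ := hP.2 (f.dualMap.dualMap x)
  have hgq : g q = 0 := hM <| by
    rw [map_zero, ← eval_g, hq]
    ext ν
    simp [show f.dualMap (g.dualMap ν) = 0 by ext; simp [hfg.apply_apply_eq_zero]]
  obtain ⟨k, rfl⟩ := (hfg q).1 hgq
  exact ⟨k, hf'' ((eval_f k).trans hq)⟩

end Duality

theorem stmt17 {R : Type u} [CommRing R] [IsNoetherianRing R]
    (M K P : ModuleCat.{u} R) (hM : GClass M)
    (f : K ⟶ P) (g : P ⟶ M)
    (hPproj : Module.Projective R P) (hPfin : Module.Finite R P)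
    (hinj : Function.Injective f) (hsurj : Function.Surjective g)
    (hex : Function.Exact f g) :
    GClass K := by
  obtain ⟨-, hExtM, hExtMDual, hMeval⟩ := hM
  have : Projective P := (IsProjective.iff_projective P).1 hPproj
  have hS : (ShortComplex.mk f g (by ext k; exact (hex _).2 ⟨k, rfl⟩)).ShortExact :=
    ModuleCat.shortComplex_shortExact _ hex hinj hsurj
  have hf' : Function.Surjective f.hom.dualMap :=
    (ModuleCat.forall_exists_comp_eq_iff_surjective_dualMap f).1
      ((hS.extZero_one_iff _).1 (hExtM 1 one_pos))
  have hSDual : (ShortComplex.mk (ModuleCat.ofHom g.hom.dualMap) (ModuleCat.ofHom f.hom.dualMap)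
      (by ext μ k; exact congrArg μ ((hex _).2 ⟨k, rfl⟩) |>.trans μ.map_zero)).ShortExact :=
    ModuleCat.shortComplex_shortExact _ (hex.dualMap hsurj)
      (LinearMap.dualMap_injective_of_surjective hsurj) hf'
  refine ⟨Module.Finite.of_injective f.hom hinj, hS.forall_extZero_pos_X₁ _ hExtM,
    hSDual.forall_extZero_pos_X₃ _ ?_ hExtMDual,
    bijective_dual_eval_of_exact hinj hex hf' (Module.bijective_dual_eval R P) hMeval.1⟩
  exact (ModuleCat.forall_exists_comp_eq_iff_surjective_dualMap _).2
    (LinearMap.dualMap_dualMap_surjective hsurj hMeval.2)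
end
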